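/- Let λ̃ be the quasi-strategy for Adam defined from W = μX.(U^a ∪ upre_over(X)) by λ̃(q^a) = { σ_u | ∀σ_c, ∃s ∈ W, (q^a, σ_u, σ_c, s) ∈ Δ^a }, and let its concretization be γ(λ̃)(q) = λ̃(ᾱ(q)) where ᾱ(q) is the partition block containing q. If λ_A is a memoryless winning strategy for Adam in the concrete safety game G (with objective reaching U), then for every play π consistent with λ_A and every index i strictly before the first visit of π to U, λ_A(π[i]) ∈ γ(λ̃)(π[i]). -/

import Mathlib

/-- Abstract transition relation: existential lift of the concrete transition function. -/
def absDelta {Q Au Ac : Type*} (δ : Q → Au → Ac → Q) (P : Set (Set Q))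
    (s : Set Q) (σu : Au) (σc : Ac) (s' : Set Q) : Prop :=
  s ∈ P ∧ s' ∈ P ∧ ∃ q ∈ s, δ q σu σc ∈ s'

/-- Over-approximating abstract uncontrollable predecessors. -/
def upreOver {Q Au Ac : Type*} (δ : Q → Au → Ac → Q) (P : Set (Set Q))
    (Sa : Set (Set Q)) : Set (Set Q) :=
  {qa ∈ P | ∃ σu : Au, ∀ σc : Ac, ∃ ra ∈ Sa, absDelta δ P qa σu σc ra}

/-- Least fixpoint of a set operator (intersection of prefixed points). -/
def lfpSet {α : Type*} (F : Set α → Set α) : Set α := ⋂₀ {X | F X ⊆ X}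

/-- A play `π` from `qI` is consistent with the memoryless Adam strategy `λA`
if at each step Adam plays `λA` and Eve plays some controllable action. -/
def ConsistentAdam {Q Au Ac : Type*} (δ : Q → Au → Ac → Q) (qI : Q)
    (lamA : Q → Au) (π : ℕ → Q) : Prop :=
  π 0 = qI ∧ ∀ i, ∃ σc : Ac, π (i + 1) = δ (π i) (lamA (π i)) σc

/-- The memoryless Adam strategy `λA` is winning: every consistent play visits `U`. -/
def AdamWinning {Q Au Ac : Type*} (δ : Q → Au → Ac → Q) (qI : Q) (U : Set Q)
    (lamA : Q → Au) : Prop :=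
  ∀ π : ℕ → Q, ConsistentAdam δ qI lamA π → ∃ i, π i ∈ U

/-!
If the successor `q'` of `π[i]` under `λA(π[i])` and some Eve action lay outside `γ(W)`, Eve
could stay outside `γ(W)` forever: a block outside `W` is not in `upre_over(W)`, so against any
Adam action some Eve action leads to a block outside `W`. Such a play avoids `U ⊆ γ(U^a)`, and
prefixed by `π[0..i]` (which avoids `U`) it is a losing play for `λA`. Hence every such `q'`
lies in a block of `W`, which is exactly `λA(π[i]) ∈ λ̃(ᾱ(π[i]))`.
-/

lemma lfpSet_eq_lfp {α : Type*} {F : Set α → Set α} (hF : Monotone F) :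
    lfpSet F = OrderHom.lfp (α := Set α) ⟨F, hF⟩ := rfl

lemma map_lfpSet {α : Type*} {F : Set α → Set α} (hF : Monotone F) :
    F (lfpSet F) = lfpSet F := by
  rw [lfpSet_eq_lfp hF]
  exact OrderHom.map_lfp (⟨F, hF⟩ : Set α →o Set α)

lemma lfpSet_subset {α : Type*} {F : Set α → Set α} (hF : Monotone F) {X : Set α}
    (hX : F X ⊆ X) : lfpSet F ⊆ X := by
  rw [lfpSet_eq_lfp hF]
  exact OrderHom.lfp_le (⟨F, hF⟩ : Set α →o Set α) hX

section Game

variable {Q Au Ac : Type*}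

lemma upreOver_mono (δ : Q → Au → Ac → Q) (P : Set (Set Q)) : Monotone (upreOver δ P) :=
  fun _ _ hST _ ⟨hP, σu, hσu⟩ =>
    ⟨hP, σu, fun σc => (hσu σc).imp fun _ ⟨hra, h⟩ => ⟨hST hra, h⟩⟩

lemma upreOver_subset (δ : Q → Au → Ac → Q) (P Sa : Set (Set Q)) : upreOver δ P Sa ⊆ P :=
  fun _ h => h.1

variable {δ : Q → Au → Ac → Q} {lamA : Q → Au}

lemma ConsistentAdam.splice {qI : Q} {π ρ : ℕ → Q} (hπ : ConsistentAdam δ qI lamA π)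
    (i : ℕ) (σc : Ac) (hρ : ConsistentAdam δ (δ (π i) (lamA (π i)) σc) lamA ρ) :
    ConsistentAdam δ qI lamA (fun m => if m ≤ i then π m else ρ (m - (i + 1))) := by
  refine ⟨by simpa using hπ.1, fun m => ?_⟩
  rcases lt_trichotomy m i with hm | rfl | hm
  · obtain ⟨c, hc⟩ := hπ.2 m
    exact ⟨c, by simpa [hm.le, Nat.succ_le_of_lt hm] using hc⟩
  · exact ⟨σc, by simpa using hρ.1⟩
  · obtain ⟨c, hc⟩ := hρ.2 (m - (i + 1))
    refine ⟨c, ?_⟩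
    simp only [if_neg (show ¬m + 1 ≤ i by omega), if_neg (show ¬m ≤ i by omega)]
    rwa [show m + 1 - (i + 1) = m - (i + 1) + 1 by omega]

lemma AdamWinning.successor {qI : Q} {U : Set Q} {π : ℕ → Q} (hwin : AdamWinning δ qI U lamA)
    (hπ : ConsistentAdam δ qI lamA π) {i : ℕ} (hnotU : ∀ j ≤ i, π j ∉ U) (σc : Ac) :
    AdamWinning δ (δ (π i) (lamA (π i)) σc) U lamA := by
  intro ρ hρ
  obtain ⟨k, hk⟩ := hwin _ (hπ.splice i σc hρ)
  by_cases hki : k ≤ i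
  · exact absurd (by simpa [hki] using hk) (hnotU k hki)
  · exact ⟨k - (i + 1), by simpa [hki] using hk⟩

lemma exists_consistentAdam_forall_mem {S : Set Q}
    (hS : ∀ q ∈ S, ∃ σc : Ac, δ q (lamA q) σc ∈ S) {q : Q} (hq : q ∈ S) :
    ∃ ρ, ConsistentAdam δ q lamA ρ ∧ ∀ n, ρ n ∈ S := by
  have : Nonempty Ac := ⟨(hS q hq).choose⟩
  choose! eve heve using hS
  let next : Q → Q := fun p => δ p (lamA p) (eve p)
  have hmem : ∀ n, next^[n] q ∈ S := by
    intro n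
    induction n with
    | zero => exact hq
    | succ n ih => rw [Function.iterate_succ_apply']; exact heve _ ih
  refine ⟨fun n => next^[n] q, ⟨rfl, fun n => ⟨eve (next^[n] q), ?_⟩⟩, hmem⟩
  exact Function.iterate_succ_apply' next n q

lemma exists_step_not_mem_sUnion {P Sa : Set (Set Q)} (hcover : ∀ q, ∃ b ∈ P, q ∈ b)
    (hSaP : Sa ⊆ P) (hpre : upreOver δ P Sa ⊆ Sa) {q : Q} (hq : q ∉ ⋃₀ Sa) (σu : Au) :
    ∃ σc, δ q σu σc ∉ ⋃₀ Sa := by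
  obtain ⟨b, hbP, hqb⟩ := hcover q
  have hb : b ∉ upreOver δ P Sa := fun hb => hq ⟨b, hpre hb, hqb⟩
  simp only [upreOver, Set.mem_sep_iff, not_and, not_exists, not_forall] at hb
  obtain ⟨σc, hσc⟩ := hb hbP σu
  exact ⟨σc, fun ⟨ra, hra, hq'⟩ => hσc ra hra ⟨hbP, hSaP hra, q, hqb, hq'⟩⟩

lemma mem_sUnion_of_adamWinning {P Sa : Set (Set Q)} {U : Set Q}
    (hcover : ∀ q, ∃ b ∈ P, q ∈ b) (hSaP : Sa ⊆ P) (hpre : upreOver δ P Sa ⊆ Sa)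
    (hUSa : U ⊆ ⋃₀ Sa) {q : Q} (hwin : AdamWinning δ q U lamA) : q ∈ ⋃₀ Sa := by
  by_contra hq
  obtain ⟨ρ, hρ, hρout⟩ := exists_consistentAdam_forall_mem (S := (⋃₀ Sa)ᶜ)
    (fun p hp => exists_step_not_mem_sUnion hcover hSaP hpre hp (lamA p)) hq
  obtain ⟨k, hk⟩ := hwin ρ hρ
  exact hρout k (hUSa hk)

end Game

theorem stmt_7_general {Q Au Ac : Type*}
    (δ : Q → Au → Ac → Q) (qI : Q) (U : Set Q)
    (P : Set (Set Q)) (hP : Setoid.IsPartition P)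
    (Ua : Set (Set Q)) (hUa : Ua ⊆ P) (hU : U ⊆ ⋃₀ Ua)
    -- W = μX.(U^a ∪ upre_over(X)) and the induced quasi-strategy λ̃ for Adam
    (W : Set (Set Q)) (hW : W = lfpSet (fun X => Ua ∪ upreOver δ P X))
    (lamTilde : Set Q → Set Au)
    (hlam : ∀ qa, lamTilde qa = {σu | ∀ σc : Ac, ∃ s ∈ W, absDelta δ P qa σu σc s})
    (lamA : Q → Au) (hwin : AdamWinning δ qI U lamA) :
    ∀ π : ℕ → Q, ConsistentAdam δ qI lamA π →
      ∀ i, (∀ j ≤ i, π j ∉ U) →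
        ∃ b ∈ P, π i ∈ b ∧ lamA (π i) ∈ lamTilde b := by
  intro π hπ i hnotU
  have hcover : ∀ q, ∃ b ∈ P, q ∈ b := fun q => (hP.2 q).exists
  have hmono : Monotone (fun X => Ua ∪ upreOver δ P X) :=
    fun _ _ h => Set.union_subset_union_right _ (upreOver_mono δ P h)
  have hWP : W ⊆ P := hW ▸ lfpSet_subset hmono (Set.union_subset hUa (upreOver_subset δ P P))
  have hfix : Ua ∪ upreOver δ P W = W := hW ▸ map_lfpSet hmono
  have hUW : U ⊆ ⋃₀ W := hU.trans (Set.sUnion_mono (Set.subset_union_left.trans hfix.subset))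
  obtain ⟨b, hbP, hib⟩ := hcover (π i)
  refine ⟨b, hbP, hib, ?_⟩
  rw [hlam]
  intro σc
  obtain ⟨s, hsW, hs⟩ := mem_sUnion_of_adamWinning hcover hWP
    (Set.subset_union_right.trans hfix.subset) hUW (hwin.successor hπ hnotU σc)
  exact ⟨s, hsW, hbP, hWP hsW, π i, hib, hs⟩

theorem stmt_7 {Q Au Ac : Type*} [Fintype Q] [Fintype Au] [Fintype Ac]
    (δ : Q → Au → Ac → Q) (qI : Q) (U : Set Q)
    (P : Set (Set Q)) (hP : Setoid.IsPartition P)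
    (Ua : Set (Set Q)) (hUa : Ua ⊆ P) (hU : U ⊆ ⋃₀ Ua)
    -- W = μX.(U^a ∪ upre_over(X)) and the induced quasi-strategy λ̃ for Adam
    (W : Set (Set Q)) (hW : W = lfpSet (fun X => Ua ∪ upreOver δ P X))
    (lamTilde : Set Q → Set Au)
    (hlam : ∀ qa, lamTilde qa = {σu | ∀ σc : Ac, ∃ s ∈ W, absDelta δ P qa σu σc s})
    (lamA : Q → Au) (hwin : AdamWinning δ qI U lamA) :
    ∀ π : ℕ → Q, ConsistentAdam δ qI lamA π →
      ∀ i, (∀ j ≤ i, π j ∉ U) →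
        ∃ b ∈ P, π i ∈ b ∧ lamA (π i) ∈ lamTilde b :=
  stmt_7_general δ qI U P hP Ua hUa hU W hW lamTilde hlam lamA hwin
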